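/- Let R = ℤ[η,d]/(2η, d² - ηd) be the quotient of the polynomial ring ℤ[η,d] by the ideal generated by 2η and d² - ηd, graded with η and d in degree 1. Then the degree-0 component of R is isomorphic to ℤ, the degree-1 component is isomorphic to ℤ/2 ⊕ ℤ (generated by η and d), and for every n ≥ 2 the degree-n component is isomorphic to ℤ/2 ⊕ ℤ/2 (generated by ηⁿ and η^{n-1}d). -/

import Mathlib

noncomputable section

open MvPolynomial

/-- The ideal (2η, d² - ηd) in ℤ[η,d], where η = X 0 and d = X 1. -/
abbrev Ieta : Ideal (MvPolynomial (Fin 2) ℤ) :=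
  Ideal.span {2 * X 0, (X 1) ^ 2 - X 0 * X 1}

/-- The ring R = ℤ[η,d]/(2η, d² - ηd). -/
abbrev R : Type := MvPolynomial (Fin 2) ℤ ⧸ Ieta

/-- The image of η in R. -/
def η : R := Ideal.Quotient.mk Ieta (X 0)

/-- The image of d in R. -/
def d : R := Ideal.Quotient.mk Ieta (X 1)


/-- The quotient map as a ℤ-linear map. -/
def q : MvPolynomial (Fin 2) ℤ →ₗ[ℤ] R := (Ideal.Quotient.mkₐ ℤ Ieta).toLinearMap

/-- The degree-n homogeneous component of R, i.e. the image in R of the homogeneous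
polynomials of degree n (η and d both have degree 1). -/
def comp (n : ℕ) : Submodule ℤ R := (homogeneousSubmodule (Fin 2) ℤ n).map q

lemma mem_comp {n : ℕ} {p : MvPolynomial (Fin 2) ℤ} (hp : p.IsHomogeneous n) :
    Ideal.Quotient.mk Ieta p ∈ comp n :=
  ⟨p, (mem_homogeneousSubmodule _ _).mpr hp, rfl⟩

lemma eta_mem : η ∈ comp 1 := mem_comp (isHomogeneous_X ℤ 0)

lemma d_mem : d ∈ comp 1 := mem_comp (isHomogeneous_X ℤ 1)

lemma eta_pow_mem (n : ℕ) : η ^ n ∈ comp n := by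
  have h : ((X 0 : MvPolynomial (Fin 2) ℤ) ^ n).IsHomogeneous n := by
    simpa using (isHomogeneous_X ℤ (0 : Fin 2)).pow n
  simpa [η, map_pow] using mem_comp h

lemma eta_pow_d_mem (n : ℕ) : η ^ (n + 1) * d ∈ comp (n + 2) := by
  have h : ((X 0 : MvPolynomial (Fin 2) ℤ) ^ (n + 1) * X 1).IsHomogeneous (n + 2) := by
    simpa using ((isHomogeneous_X ℤ (0 : Fin 2)).pow (n + 1)).mul (isHomogeneous_X ℤ (1 : Fin 2))
  simpa [η, d, map_pow, map_mul] using mem_comp h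

/-! Each graded piece is spanned by the images of the monomials ηᵃdᵇ of its degree, and
d^(b+1) = ηᵇd reduces these to 1 in degree 0 and to ηⁿ, η^(n-1)d in degree n ≥ 1; by 2η = 0 all of
them except 1 and d have order dividing 2. That there are no further relations is detected by ring
maps out of R: η ↦ X, d ↦ 0 and η, d ↦ X into 𝔽₂[X] separate ηⁿ from η^(n-1)d modulo 2,
η ↦ 0, d ↦ ε into the dual numbers ℤ[ε] reads off the integer coefficient of d, and the
augmentation detects degree 0. -/

open Submodule Set

section

variable {M P : Type*} [AddCommGroup M] [AddCommGroup P]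

theorem zsmul_eq_zero_of_two_zsmul_eq_zero {x : M} (hx : (2 : ℤ) • x = 0) {a : ℤ}
    (ha : (a : ZMod 2) = 0) : a • x = 0 := by
  obtain ⟨c, rfl⟩ := (ZMod.intCast_zmod_eq_zero_iff_dvd a 2).mp ha
  rw [Nat.cast_ofNat, mul_comm, mul_zsmul, hx, zsmul_zero]

theorem bijective_domRestrict_of_le_span_range {ι : Type*} [Fintype ι] {N : Submodule ℤ M}
    {x : ι → M} (hx : ∀ i, x i ∈ N) (hN : N ≤ span ℤ (range x)) (F : M →+ P)
    (hgen : ∀ p : P, ∃ c : ι → ℤ, ∑ i, c i • F (x i) = p)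
    (hrel : ∀ c : ι → ℤ, ∑ i, c i • F (x i) = 0 → ∑ i, c i • x i = 0) :
    Function.Bijective (F.domRestrict N) := by
  constructor
  · refine (injective_iff_map_eq_zero _).mpr fun ⟨z, hz⟩ hFz => ?_
    obtain ⟨c, rfl⟩ := (mem_span_range_iff_exists_fun ℤ).mp (hN hz)
    simp only [AddMonoidHom.domRestrict_apply, map_sum, map_zsmul] at hFz
    exact Subtype.ext (hrel c hFz)
  · intro p
    obtain ⟨c, rfl⟩ := hgen p
    refine ⟨⟨∑ i, c i • x i, sum_mem fun i _ => N.smul_mem (c i) (hx i)⟩, ?_⟩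
    simp [map_sum, map_zsmul]

end

theorem MvPolynomial.homogeneousSubmodule_eq_span_monomial (σ R : Type*) [CommSemiring R]
    (n : ℕ) : homogeneousSubmodule σ R n =
      span R ((fun v => monomial v (1 : R)) '' {v | v.degree = n}) := by
  rw [homogeneousSubmodule_eq_finsupp_supported, AddMonoidAlgebra.supported_eq_span_single]
  rfl

theorem two_zsmul_eta_mul (r : R) : (2 : ℤ) • (η * r) = 0 := by
  have h : Ideal.Quotient.mk Ieta (2 * X 0) = 0 :=
    Ideal.Quotient.eq_zero_iff_mem.mpr (Ideal.subset_span (by simp))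
  rw [map_mul, map_ofNat] at h
  rw [two_zsmul, ← two_mul, ← mul_assoc, η, h, zero_mul]

theorem d_sq : d ^ 2 = η * d := by
  have h : Ideal.Quotient.mk Ieta ((X 1) ^ 2 - X 0 * X 1) = 0 :=
    Ideal.Quotient.eq_zero_iff_mem.mpr (Ideal.subset_span (by simp))
  rwa [map_sub, sub_eq_zero, map_pow, map_mul] at h

theorem d_pow_succ (b : ℕ) : d ^ (b + 1) = η ^ b * d := by
  induction b with
  | zero => simp
  | succ b ih => rw [pow_succ, ih, mul_assoc, ← sq, d_sq, ← mul_assoc, ← pow_succ]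

theorem two_zsmul_eta : (2 : ℤ) • η = 0 := by simpa using two_zsmul_eta_mul 1

theorem mk_monomial_one (v : Fin 2 →₀ ℕ) :
    Ideal.Quotient.mk Ieta (monomial v 1) = η ^ v 0 * d ^ v 1 := by
  simp [monomial_eq, Finsupp.prod_fintype, Fin.prod_univ_two, η, d]

theorem comp_eq_span (n : ℕ) :
    comp n = span ℤ ((fun v : Fin 2 →₀ ℕ => η ^ v 0 * d ^ v 1) '' {v | v 0 + v 1 = n}) := by
  simp only [comp, homogeneousSubmodule_eq_span_monomial, map_span, image_image,
    Finsupp.degree_eq_sum, Fin.sum_univ_two]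
  congr 1
  ext
  simp [q, mk_monomial_one]

theorem comp_zero_le : comp 0 ≤ span ℤ (range ![(1 : R)]) := by
  rw [comp_eq_span, span_le]
  rintro _ ⟨v, hv, rfl⟩
  obtain ⟨h0, h1⟩ : v 0 = 0 ∧ v 1 = 0 := by simpa using hv
  exact subset_span ⟨0, by simp [h0, h1]⟩

theorem comp_succ_le (m : ℕ) : comp (m + 1) ≤ span ℤ (range ![η ^ (m + 1), η ^ m * d]) := by
  rw [comp_eq_span, span_le]
  rintro _ ⟨v, hv, rfl⟩
  have hv : v 0 + v 1 = m + 1 := hv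
  cases h1 : v 1 with
  | zero => exact subset_span ⟨0, by simp [h1, show v 0 = m + 1 by simpa [h1] using hv]⟩
  | succ b =>
    refine subset_span ⟨1, ?_⟩
    simp [h1, d_pow_succ, ← mul_assoc, ← pow_add, show v 0 + b = m by omega]

namespace R

variable {S : Type*} [CommRing S]

def lift (a b : S) (ha : 2 * a = 0) (hb : b ^ 2 = a * b) : R →+* S :=
  Ideal.Quotient.lift Ieta (aeval ![a, b]).toRingHom fun _ hx =>
    (Ideal.span_le (I := RingHom.ker _)).mpr (by simp [insert_subset_iff, ha, hb]) hx

variable (a b : S) (ha : 2 * a = 0) (hb : b ^ 2 = a * b)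

@[simp]
theorem lift_eta : lift a b ha hb η = a := by simp [lift, η]

@[simp]
theorem lift_d : lift a b ha hb d = b := by simp [lift, d]

end R

section Coordinates

open Polynomial

def augmentation : R →+* ℤ := R.lift 0 0 (by simp) (by simp)

def etaToX : R →+* (ZMod 2)[X] := R.lift X 0 (by simp [CharTwo.two_eq_zero]) (by simp)

def etaDToX : R →+* (ZMod 2)[X] := R.lift X X (by simp [CharTwo.two_eq_zero]) (by ring)

def dToEps : R →+* DualNumber ℤ :=
  R.lift 0 DualNumber.eps (by simp) (by simp [sq, DualNumber.eps_mul_eps])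

def coeffAt (k : ℕ) (f : R →+* (ZMod 2)[X]) : R →+ ZMod 2 :=
  (lcoeff (ZMod 2) k).toAddMonoidHom.comp f.toAddMonoidHom

def degreeOneCoords : R →+ ZMod 2 × ℤ :=
  (coeffAt 1 etaToX).prod ((TrivSqZeroExt.sndHom ℤ ℤ).toAddMonoidHom.comp dToEps.toAddMonoidHom)

def degreeCoords (k : ℕ) : R →+ ZMod 2 × ZMod 2 :=
  (coeffAt k etaToX).prod (coeffAt k etaDToX - coeffAt k etaToX)

theorem degreeOneCoords_eta : degreeOneCoords η = (1, 0) := by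
  simp [degreeOneCoords, coeffAt, etaToX, dToEps]

theorem degreeOneCoords_d : degreeOneCoords d = (0, 1) := by
  simp [degreeOneCoords, coeffAt, etaToX, dToEps]

theorem degreeCoords_eta_pow (k : ℕ) : degreeCoords k (η ^ k) = (1, 0) := by
  simp [degreeCoords, coeffAt, etaToX, etaDToX]

theorem degreeCoords_eta_pow_mul_d (k : ℕ) : degreeCoords (k + 1) (η ^ k * d) = (0, 1) := by
  simp [degreeCoords, coeffAt, etaToX, etaDToX, ← pow_succ]

end Coordinates

theorem bijective_augmentation_comp_zero :
    Function.Bijective (augmentation.toAddMonoidHom.domRestrict (comp 0)) := by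
  refine bijective_domRestrict_of_le_span_range (fun i => ?_) comp_zero_le _ (fun p => ⟨![p], ?_⟩)
    fun c hc => ?_
  · fin_cases i
    exact mem_comp (isHomogeneous_one _ _)
  · simp
  · simp_all

theorem bijective_degreeOneCoords_comp_one :
    Function.Bijective (degreeOneCoords.domRestrict (comp 1)) := by
  refine bijective_domRestrict_of_le_span_range (x := ![η, d]) (fun i => ?_)
    (by simpa using comp_succ_le 0) _ (fun ⟨u, b⟩ => ⟨![u.cast, b], ?_⟩) fun c hc => ?_
  · fin_cases i
    exacts [eta_mem, d_mem]
  · simp [degreeOneCoords_eta, degreeOneCoords_d, Prod.ext_iff]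
  · simp only [Fin.sum_univ_two] at hc ⊢
    simp [degreeOneCoords_eta, degreeOneCoords_d, Prod.ext_iff] at hc
    simp [zsmul_eq_zero_of_two_zsmul_eq_zero two_zsmul_eta hc.1, hc.2]

theorem bijective_degreeCoords_comp (n : ℕ) :
    Function.Bijective ((degreeCoords (n + 2)).domRestrict (comp (n + 2))) := by
  refine bijective_domRestrict_of_le_span_range (x := ![η ^ (n + 2), η ^ (n + 1) * d])
    (fun i => ?_) (comp_succ_le (n + 1)) _ (fun ⟨u, v⟩ => ⟨![u.cast, v.cast], ?_⟩) fun c hc => ?_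
  · fin_cases i
    exacts [eta_pow_mem _, eta_pow_d_mem n]
  · simp [degreeCoords_eta_pow, degreeCoords_eta_pow_mul_d, Prod.ext_iff]
  · simp only [Fin.sum_univ_two] at hc ⊢
    simp [degreeCoords_eta_pow, degreeCoords_eta_pow_mul_d, Prod.ext_iff] at hc
    have h₀ : c 0 • η ^ (n + 2) = 0 := by
      rw [pow_succ']
      exact zsmul_eq_zero_of_two_zsmul_eq_zero (two_zsmul_eta_mul _) hc.1
    have h₁ : c 1 • (η ^ (n + 1) * d) = 0 := by
      rw [pow_succ', mul_assoc]
      exact zsmul_eq_zero_of_two_zsmul_eq_zero (two_zsmul_eta_mul _) hc.2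
    simp [h₀, h₁]

/-- With η and d in degree 1, the degree-0 component of R = ℤ[η,d]/(2η, d² - ηd) is ℤ,
the degree-1 component is ℤ/2 ⊕ ℤ generated by η and d, and for n ≥ 2 the degree-n component
is ℤ/2 ⊕ ℤ/2 generated by ηⁿ and η^{n-1}·d. -/
theorem stmt0 :
    Nonempty (comp 0 ≃+ ℤ) ∧
    (∃ e : comp 1 ≃+ (ZMod 2 × ℤ),
      e ⟨η, eta_mem⟩ = (1, 0) ∧ e ⟨d, d_mem⟩ = (0, 1)) ∧
    ∀ n : ℕ, ∃ e : comp (n + 2) ≃+ (ZMod 2 × ZMod 2),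
      e ⟨η ^ (n + 2), eta_pow_mem (n + 2)⟩ = (1, 0) ∧
      e ⟨η ^ (n + 1) * d, eta_pow_d_mem n⟩ = (0, 1) :=
  ⟨⟨AddEquiv.ofBijective _ bijective_augmentation_comp_zero⟩,
    ⟨AddEquiv.ofBijective _ bijective_degreeOneCoords_comp_one,
      degreeOneCoords_eta, degreeOneCoords_d⟩,
    fun n => ⟨AddEquiv.ofBijective _ (bijective_degreeCoords_comp n),
      degreeCoords_eta_pow _, degreeCoords_eta_pow_mul_d _⟩⟩

end
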